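/- arXiv:2506.12218 — 3 statements merged into one kernel-verified Lean document; each statement's English description precedes it below -/
import Mathlib

section
/- (Proposition 1) Let N ≥ 1 and let A be an N×N real strictly lower triangular matrix with nonnegative entries, W = (I − A)⁻¹, and for each node k let S_k = W · D_k · W⁻¹ be the causal graph-shift operator. Then for every node k the support of S_k is contained in the support of W: for all indices i, j, if (S_k) i j ≠ 0 then W i j ≠ 0. -/
/-!
Since `W⁻¹ = 1 - A`, the entry `(W D W⁻¹) i j` is `∑ m, W i m * D m m * (1 - A) m j` for any
diagonal `D`, so it can only be nonzero if `W i m ≠ 0` for some `m` with `m = j` or `A m j ≠ 0`.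
In the second case `W = 1 + W A` has nonnegative entries, whence `W i j ≥ W i m * A m j > 0`.
-/

open Matrix

namespace Matrix

variable {n R : Type*} [Fintype n] [DecidableEq n]

theorem exists_ne_zero_of_mul_diagonal_mul_apply_ne_zero [NonUnitalNonAssocSemiring R] {M N : Matrix n n R}
    {d : n → R} {i j : n} (h : (M * diagonal d * N) i j ≠ 0) : ∃ m, M i m ≠ 0 ∧ N m j ≠ 0 := by
  rw [mul_apply] at h
  obtain ⟨m, -, hm⟩ := Finset.exists_ne_zero_of_sum_ne_zero h
  exact ⟨m, fun h0 => hm (by simp [h0]), fun h0 => hm (by simp [h0])⟩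

variable [LinearOrder n]

def IsStrictlyLowerTriangular [Zero R] (A : Matrix n n R) : Prop :=
  ∀ i j, i ≤ j → A i j = 0

section CommRing

variable [CommRing R] {A : Matrix n n R}

theorem IsStrictlyLowerTriangular.det_one_sub (hA : A.IsStrictlyLowerTriangular) :
    (1 - A).det = 1 := by
  have hlower : (1 - A).IsLowerTriangular := fun i j (hij : i < j) => by
    simp [hij.ne, hA i j hij.le]
  rw [det_of_isLowerTriangular _ hlower]
  exact Finset.prod_eq_one fun i _ => by simp [hA i i le_rfl]

theorem IsStrictlyLowerTriangular.isUnit_det_one_sub (hA : A.IsStrictlyLowerTriangular) :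
    IsUnit (1 - A).det := by
  rw [hA.det_one_sub]
  exact isUnit_one

theorem IsStrictlyLowerTriangular.inv_one_sub_eq_one_add_mul (hA : A.IsStrictlyLowerTriangular) :
    (1 - A)⁻¹ = 1 + A * (1 - A)⁻¹ := by
  rw [← sub_eq_iff_eq_add, ← one_sub_mul, mul_nonsing_inv _ hA.isUnit_det_one_sub]

theorem IsStrictlyLowerTriangular.inv_one_sub_eq_one_add_mul' (hA : A.IsStrictlyLowerTriangular) :
    (1 - A)⁻¹ = 1 + (1 - A)⁻¹ * A := by
  rw [← sub_eq_iff_eq_add, ← mul_one_sub, nonsing_inv_mul _ hA.isUnit_det_one_sub]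

end CommRing

section Ordered

variable [CommRing R] [PartialOrder R] [IsStrictOrderedRing R] {A : Matrix n n R}

/-- Row `i` of `(1 - A)⁻¹ = 1 + A (1 - A)⁻¹` only involves rows `m < i`. -/
theorem IsStrictlyLowerTriangular.inv_one_sub_nonneg (hA : A.IsStrictlyLowerTriangular)
    (hA₀ : ∀ i j, 0 ≤ A i j) (i j : n) : 0 ≤ (1 - A)⁻¹ i j := by
  induction i using WellFoundedLT.induction with
  | _ i ih =>
    rw [hA.inv_one_sub_eq_one_add_mul, add_apply, mul_apply]
    refine add_nonneg (by rw [one_apply]; split_ifs <;> simp) (Finset.sum_nonneg fun m _ => ?_)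
    rcases lt_or_ge m i with hmi | him
    · exact mul_nonneg (hA₀ i m) (ih m hmi)
    · simp [hA i m him]

theorem IsStrictlyLowerTriangular.inv_one_sub_apply_pos (hA : A.IsStrictlyLowerTriangular)
    (hA₀ : ∀ i j, 0 ≤ A i j) {i m j : n} (him : (1 - A)⁻¹ i m ≠ 0) (hmj : A m j ≠ 0) :
    0 < (1 - A)⁻¹ i j := by
  have hW₀ := hA.inv_one_sub_nonneg hA₀
  calc 0 < (1 - A)⁻¹ i m * A m j := mul_pos ((hW₀ i m).lt_of_ne' him) ((hA₀ m j).lt_of_ne' hmj)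
    _ ≤ ∑ m', (1 - A)⁻¹ i m' * A m' j :=
      Finset.single_le_sum (fun m' _ => mul_nonneg (hW₀ i m') (hA₀ m' j)) (Finset.mem_univ m)
    _ ≤ (1 - A)⁻¹ i j := by
      conv_rhs => rw [hA.inv_one_sub_eq_one_add_mul']
      rw [add_apply, mul_apply, one_apply]
      exact le_add_of_nonneg_left (by split_ifs <;> simp)

theorem IsStrictlyLowerTriangular.inv_one_sub_mul_diagonal_mul_one_sub_apply_ne_zero
    (hA : A.IsStrictlyLowerTriangular) (hA₀ : ∀ i j, 0 ≤ A i j) {d : n → R} {i j : n}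
    (h : ((1 - A)⁻¹ * diagonal d * (1 - A)) i j ≠ 0) : (1 - A)⁻¹ i j ≠ 0 := by
  obtain ⟨m, him, hmj⟩ := exists_ne_zero_of_mul_diagonal_mul_apply_ne_zero h
  by_cases hm : m = j
  · exact hm ▸ him
  · have hAmj : A m j ≠ 0 := by simpa [sub_apply, one_apply, hm] using hmj
    exact (hA.inv_one_sub_apply_pos hA₀ him hAmj).ne'

end Ordered

end Matrix

theorem causal_gso_support_subset_general {N : ℕ}
    (A : Matrix (Fin N) (Fin N) ℝ)
    (hA : ∀ i j : Fin N, i ≤ j → A i j = 0)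
    (hApos : ∀ i j : Fin N, 0 ≤ A i j)
    (W : Matrix (Fin N) (Fin N) ℝ) (hW : W = (1 - A)⁻¹)
    (D : Fin N → Matrix (Fin N) (Fin N) ℝ)
    (hD : ∀ k, D k = Matrix.diagonal (fun i => if W k i ≠ 0 then (1 : ℝ) else 0))
    (S : Fin N → Matrix (Fin N) (Fin N) ℝ)
    (hS : ∀ k, S k = W * D k * W⁻¹) :
    ∀ k i j : Fin N, S k i j ≠ 0 → W i j ≠ 0 := by
  have hA' : A.IsStrictlyLowerTriangular := hA
  subst hW
  intro k i j hS_ne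
  rw [hS, hD, nonsing_inv_nonsing_inv _ hA'.isUnit_det_one_sub] at hS_ne
  exact hA'.inv_one_sub_mul_diagonal_mul_one_sub_apply_ne_zero hApos hS_ne

/-- Proposition 1: For a strictly lower triangular real matrix `A`
with nonnegative entries, `W = (I - A)⁻¹`, and causal graph-shift operators
`S k = W * D k * W⁻¹`, the support of each `S k` is contained in the support of
`W`: if `(S k) i j ≠ 0` then `W i j ≠ 0`. -/
theorem causal_gso_support_subset {N : ℕ} (hN : 1 ≤ N)
    (A : Matrix (Fin N) (Fin N) ℝ)
    (hA : ∀ i j : Fin N, i ≤ j → A i j = 0)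
    (hApos : ∀ i j : Fin N, 0 ≤ A i j)
    (W : Matrix (Fin N) (Fin N) ℝ) (hW : W = (1 - A)⁻¹)
    (D : Fin N → Matrix (Fin N) (Fin N) ℝ)
    (hD : ∀ k, D k = Matrix.diagonal (fun i => if W k i ≠ 0 then (1 : ℝ) else 0))
    (S : Fin N → Matrix (Fin N) (Fin N) ℝ)
    (hS : ∀ k, S k = W * D k * W⁻¹) :
    ∀ k i j : Fin N, S k i j ≠ 0 → W i j ≠ 0 :=
  causal_gso_support_subset_general A hA hApos W hW D hD S hS
end

section
/- Let N ≥ 1, let A be an N×N real strictly lower triangular matrix with W = (I − A)⁻¹ and diagonal matrices D_k ((D_k) i i = 1 iff W k i ≠ 0). Let σ be a permutation of Fin N with permutation matrix P, let A' = P · A · Pᵀ, W' = (I − A')⁻¹, and for each q let D'_q be the diagonal matrix with (D'_q) i i = 1 iff W' q i ≠ 0 and 0 otherwise. Then for every node k, D'_{σ(k)} = P · D_k · Pᵀ; i.e., the diagonal matrices encoding the partial order are unchanged by relabeling up to the permutation. -/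
/-!
Conjugating by the permutation matrix of `σ` is just reindexing by `σ⁻¹`, and reindexing by a
bijection commutes with `1 - ·`, with matrix inversion and with forming diagonal matrices. Hence
`W'` is `W` reindexed, and the support pattern of row `σ k` of `W'` is that of row `k` of `W`.
-/

open Matrix

namespace Matrix

variable {n R : Type*} [DecidableEq n]

lemma eq_permMatrix_inv_of_apply [Zero R] [One R] {σ : Equiv.Perm n} {P : Matrix n n R}
    (hP : ∀ i j, P i j = if σ j = i then 1 else 0) : P = σ⁻¹.permMatrix R := by
  ext i j
  rw [hP]
  simp [Equiv.symm_apply_eq, eq_comm (a := i)]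

variable [Fintype n]

lemma permMatrix_mul_mul_transpose [NonAssocSemiring R] (σ : Equiv.Perm n) (M : Matrix n n R) :
    σ.permMatrix R * M * (σ.permMatrix R)ᵀ = M.submatrix σ σ := by
  rw [transpose_permMatrix, PEquiv.toMatrix_toPEquiv_mul, PEquiv.mul_toMatrix_toPEquiv,
    submatrix_submatrix]
  rfl

lemma inv_one_sub_submatrix_equiv [CommRing R] (M : Matrix n n R) (e : n ≃ n) :
    (1 - M.submatrix e e)⁻¹ = (1 - M)⁻¹.submatrix e e := by
  rw [← inv_submatrix_equiv,
    show (1 - M).submatrix e e = (1 : Matrix n n R).submatrix e e - M.submatrix e e from rfl,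
    submatrix_one_equiv]

end Matrix

theorem permuted_order_diagonals_general {N : ℕ}
    (A : Matrix (Fin N) (Fin N) ℝ)
    (W : Matrix (Fin N) (Fin N) ℝ) (hW : W = (1 - A)⁻¹)
    (D : Fin N → Matrix (Fin N) (Fin N) ℝ)
    (hD : ∀ k, D k = Matrix.diagonal (fun i => if W k i ≠ 0 then (1 : ℝ) else 0))
    (σ : Equiv.Perm (Fin N))
    (P : Matrix (Fin N) (Fin N) ℝ)
    (hP : ∀ i j : Fin N, P i j = if σ j = i then 1 else 0)
    (A' : Matrix (Fin N) (Fin N) ℝ) (hA'def : A' = P * A * Pᵀ)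
    (W' : Matrix (Fin N) (Fin N) ℝ) (hW' : W' = (1 - A')⁻¹)
    (D' : Fin N → Matrix (Fin N) (Fin N) ℝ)
    (hD' : ∀ q, D' q = Matrix.diagonal (fun i => if W' q i ≠ 0 then (1 : ℝ) else 0)) :
    ∀ k : Fin N, D' (σ k) = P * D k * Pᵀ := by
  have hP_eq := eq_permMatrix_inv_of_apply hP
  have hW'_eq : W' = W.submatrix ⇑σ⁻¹ ⇑σ⁻¹ := by
    rw [hW', hA'def, hP_eq, permMatrix_mul_mul_transpose, inv_one_sub_submatrix_equiv, hW]
  intro k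
  rw [hD', hD, hP_eq, permMatrix_mul_mul_transpose, submatrix_diagonal_equiv, hW'_eq]
  simp [Function.comp_def]

/-- Relabeling the DAG by a permutation `σ` (with permutation
matrix `P`, `A' = P A Pᵀ`, `W' = (I - A')⁻¹`) permutes the diagonal matrices
encoding the partial order: `D'_{σ(k)} = P * D k * Pᵀ` for every node `k`. -/
theorem permuted_order_diagonals {N : ℕ} (hN : 1 ≤ N)
    (A : Matrix (Fin N) (Fin N) ℝ)
    (hA : ∀ i j : Fin N, i ≤ j → A i j = 0)
    (W : Matrix (Fin N) (Fin N) ℝ) (hW : W = (1 - A)⁻¹)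
    (D : Fin N → Matrix (Fin N) (Fin N) ℝ)
    (hD : ∀ k, D k = Matrix.diagonal (fun i => if W k i ≠ 0 then (1 : ℝ) else 0))
    (σ : Equiv.Perm (Fin N))
    (P : Matrix (Fin N) (Fin N) ℝ)
    (hP : ∀ i j : Fin N, P i j = if σ j = i then 1 else 0)
    (A' : Matrix (Fin N) (Fin N) ℝ) (hA'def : A' = P * A * Pᵀ)
    (W' : Matrix (Fin N) (Fin N) ℝ) (hW' : W' = (1 - A')⁻¹)
    (D' : Fin N → Matrix (Fin N) (Fin N) ℝ)
    (hD' : ∀ q, D' q = Matrix.diagonal (fun i => if W' q i ≠ 0 then (1 : ℝ) else 0)) :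
    ∀ k : Fin N, D' (σ k) = P * D k * Pᵀ :=
  permuted_order_diagonals_general A W hW D hD σ P hP A' hA'def W' hW' D' hD'
end

section
/- (Causal graph filters are closed under composition) Let N ≥ 1, let A be an N×N real strictly lower triangular matrix, W = (I − A)⁻¹, D_k the diagonal 0/1 matrices with (D_k) i i = 1 iff W k i ≠ 0, and S_k = W · D_k · W⁻¹ the causal graph-shift operators. Then for all coefficient vectors θ, φ ∈ ℝ^N there exists a coefficient vector ψ ∈ ℝ^N such that (∑_k θ_k · S_k) · (∑_k φ_k · S_k) = ∑_k ψ_k · S_k; i.e., the composition of two causal graph filters can always be re-parameterized as a single causal graph filter. -/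
/-!
A causal filter `∑ θ k • W (diag M_k) W⁻¹`, where `M k i = 1` iff `W k i ≠ 0`, equals
`W (diag (θ ᵥ* M)) W⁻¹`. Conjugates of diagonal matrices multiply entrywise, so the product of two
filters is again a conjugate `W (diag d) W⁻¹`. It is a filter because `θ ↦ θ ᵥ* M` is onto: `W` is
lower unitriangular, so its diagonal is nonzero and `M` is lower unitriangular, hence invertible.
-/

open Matrix

namespace Matrix

section Conjugation

variable {n R : Type*} [Fintype n] [DecidableEq n] [CommRing R]

theorem sum_smul_conj_diagonal (W M : Matrix n n R) (c : n → R) :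
    ∑ k, c k • (W * diagonal (M k) * W⁻¹) = W * diagonal (c ᵥ* M) * W⁻¹ := by
  have hdiag : ∑ k, c k • diagonal (M k) = diagonal (c ᵥ* M) := by
    simp only [← diagonal_smul, vecMul_eq_sum]
    exact (map_sum (diagonalAddMonoidHom n R) _ _).symm
  simp only [← hdiag, Finset.mul_sum, Finset.sum_mul, Matrix.mul_smul, Matrix.smul_mul]

theorem conj_diagonal_mul_conj_diagonal {W : Matrix n n R} (hW : IsUnit W.det) (a b : n → R) :
    W * diagonal a * W⁻¹ * (W * diagonal b * W⁻¹) = W * diagonal (a * b) * W⁻¹ := by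
  calc W * diagonal a * W⁻¹ * (W * diagonal b * W⁻¹)
      = W * (diagonal a * (W⁻¹ * W) * diagonal b) * W⁻¹ := by simp only [Matrix.mul_assoc]
    _ = W * diagonal (a * b) * W⁻¹ := by
      rw [nonsing_inv_mul W hW, Matrix.mul_one, diagonal_mul_diagonal]
      rfl

theorem exists_sum_smul_conj_diagonal_eq_mul {W M : Matrix n n R} (hW : IsUnit W.det)
    (hM : IsUnit M) (θ φ : n → R) :
    ∃ ψ : n → R,
      (∑ k, θ k • (W * diagonal (M k) * W⁻¹)) * (∑ k, φ k • (W * diagonal (M k) * W⁻¹)) =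
        ∑ k, ψ k • (W * diagonal (M k) * W⁻¹) := by
  obtain ⟨ψ, hψ⟩ := vecMul_surjective_iff_isUnit.mpr hM ((θ ᵥ* M) * (φ ᵥ* M))
  refine ⟨ψ, ?_⟩
  simp only [sum_smul_conj_diagonal, conj_diagonal_mul_conj_diagonal hW, hψ]

end Conjugation

section LowerTriangular

variable {n R : Type*} [LinearOrder n] [CommRing R]

theorem isLowerTriangular_one_sub {A : Matrix n n R} (hA : ∀ i j, i ≤ j → A i j = 0) :
    (1 - A).IsLowerTriangular :=
  blockTriangular_one.sub fun i j (hij : i < j) => hA i j hij.le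

variable [Fintype n]

theorem det_one_sub_of_strictLowerTriangular {A : Matrix n n R}
    (hA : ∀ i j, i ≤ j → A i j = 0) : (1 - A).det = 1 := by
  rw [det_of_isLowerTriangular _ (isLowerTriangular_one_sub hA)]
  simp [hA _ _ le_rfl]

theorem IsLowerTriangular.isUnit_diag_of_isUnit_det {W : Matrix n n R}
    (hW : W.IsLowerTriangular) (hdet : IsUnit W.det) (i : n) : IsUnit (W i i) := by
  rw [det_of_isLowerTriangular W hW, IsUnit.prod_univ_iff] at hdet
  exact hdet i

def supportIndicator [DecidableEq R] (W : Matrix n n R) : Matrix n n R :=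
  of fun i j => if W i j ≠ 0 then 1 else 0

theorem IsLowerTriangular.det_supportIndicator [Nontrivial R] [DecidableEq R]
    {W : Matrix n n R} (hW : W.IsLowerTriangular) (hdet : IsUnit W.det) :
    W.supportIndicator.det = 1 := by
  have htri : W.supportIndicator.IsLowerTriangular := fun i j hij => by
    simp [supportIndicator, hW hij]
  rw [det_of_isLowerTriangular _ htri]
  simp [supportIndicator, (hW.isUnit_diag_of_isUnit_det hdet _).ne_zero]

end LowerTriangular

end Matrix

theorem causal_graph_filters_closed_under_composition_general {N : ℕ}
    (A : Matrix (Fin N) (Fin N) ℝ)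
    (hA : ∀ i j : Fin N, i ≤ j → A i j = 0)
    (W : Matrix (Fin N) (Fin N) ℝ) (hW : W = (1 - A)⁻¹)
    (D : Fin N → Matrix (Fin N) (Fin N) ℝ)
    (hD : ∀ k, D k = Matrix.diagonal (fun i => if W k i ≠ 0 then (1 : ℝ) else 0))
    (S : Fin N → Matrix (Fin N) (Fin N) ℝ)
    (hS : ∀ k, S k = W * D k * W⁻¹) :
    ∀ θ φ : Fin N → ℝ, ∃ ψ : Fin N → ℝ,
      (∑ k : Fin N, θ k • S k) * (∑ k : Fin N, φ k • S k) =
        ∑ k : Fin N, ψ k • S k := by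
  obtain rfl : S = fun k => W * D k * W⁻¹ := funext hS
  obtain rfl : D = fun k => diagonal (W.supportIndicator k) := funext hD
  have hdet : IsUnit (1 - A).det := by simp [det_one_sub_of_strictLowerTriangular hA]
  have : Invertible (1 - A) := invertibleOfIsUnitDet _ hdet
  have hWtri : W.IsLowerTriangular :=
    hW ▸ blockTriangular_inv_of_blockTriangular (isLowerTriangular_one_sub hA)
  have hWdet : IsUnit W.det := hW ▸ isUnit_nonsing_inv_det _ hdet
  have hM : IsUnit W.supportIndicator := by
    rw [isUnit_iff_isUnit_det, hWtri.det_supportIndicator hWdet]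
    exact isUnit_one
  exact exists_sum_smul_conj_diagonal_eq_mul hWdet hM

/-- Causal graph filters are closed under composition: for all
coefficient vectors `θ`, `φ` there is a coefficient vector `ψ` with
`(∑_k θ_k S_k) * (∑_k φ_k S_k) = ∑_k ψ_k S_k`. -/
theorem causal_graph_filters_closed_under_composition {N : ℕ} (hN : 1 ≤ N)
    (A : Matrix (Fin N) (Fin N) ℝ)
    (hA : ∀ i j : Fin N, i ≤ j → A i j = 0)
    (W : Matrix (Fin N) (Fin N) ℝ) (hW : W = (1 - A)⁻¹)
    (D : Fin N → Matrix (Fin N) (Fin N) ℝ)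
    (hD : ∀ k, D k = Matrix.diagonal (fun i => if W k i ≠ 0 then (1 : ℝ) else 0))
    (S : Fin N → Matrix (Fin N) (Fin N) ℝ)
    (hS : ∀ k, S k = W * D k * W⁻¹) :
    ∀ θ φ : Fin N → ℝ, ∃ ψ : Fin N → ℝ,
      (∑ k : Fin N, θ k • S k) * (∑ k : Fin N, φ k • S k) =
        ∑ k : Fin N, ψ k • S k :=
  causal_graph_filters_closed_under_composition_general A hA W hW D hD S hS
end
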